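/- Let p = φ − 1 (so q = 1 − p = p²). For every ℓ ≥ 1 and every n ∈ ℕ with n < 2^ℓ, the sum p + f_ℓ(n) equals either f_{ℓ+1}(c) for some c ∈ ℕ with c < 2^{ℓ+1}, or 1 + p·f_{ℓ+1}(d) for some d ∈ ℕ with d < 2^{ℓ+1}. -/
import Mathlib


/-- The golden ratio `φ = (1 + √5) / 2`. -/
noncomputable def phi : ℝ := (1 + Real.sqrt 5) / 2

/-- Given `p ∈ (0,1)` (with `q = 1 - p`), the recursively defined division functions
`f_ℓ : {0, …, 2^ℓ - 1} → [0, 1)`: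
`f₀ 0 = 0`, `f_{ℓ+1} n = p * f_ℓ n` if `n < 2^ℓ`, and `f_{ℓ+1} n = p + q * f_ℓ (n - 2^ℓ)`
otherwise. -/
noncomputable def fcut (p : ℝ) : ℕ → ℕ → ℝ
  | 0, _ => 0
  | ℓ + 1, n => if n < 2 ^ ℓ then p * fcut p ℓ n else p + (1 - p) * fcut p ℓ (n - 2 ^ ℓ)

lemma fcut_lo (p : ℝ) (ℓ n : ℕ) (h : n < 2 ^ ℓ) :
    fcut p (ℓ + 1) n = p * fcut p ℓ n := by
  rw [fcut, if_pos h]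

lemma fcut_hi (p : ℝ) (ℓ n : ℕ) (h : ¬ n < 2 ^ ℓ) :
    fcut p (ℓ + 1) n = p + (1 - p) * fcut p ℓ (n - 2 ^ ℓ) := by
  rw [fcut, if_neg h]

lemma fcut_two_mul (p : ℝ) : ∀ ℓ n, n < 2 ^ ℓ → fcut p (ℓ + 1) (2 * n) = fcut p ℓ n := by
  intro ℓ
  induction ℓ with
  | zero =>
    intro n hn
    interval_cases n
    simp [fcut]
  | succ k ih =>
    intro n hn
    by_cases h : n < 2 ^ k
    · have h2 : 2 * n < 2 ^ (k + 1) := by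
        have : (2:ℕ) ^ (k+1) = 2 * 2 ^ k := by ring
        omega
      rw [fcut_lo p (k+1) (2*n) h2, ih n h, fcut_lo p k n h]
    · have h2 : ¬ (2 * n < 2 ^ (k + 1)) := by
        have : (2:ℕ) ^ (k+1) = 2 * 2 ^ k := by ring
        omega
      have hsub : 2 * n - 2 ^ (k+1) = 2 * (n - 2 ^ k) := by
        have : (2:ℕ) ^ (k+1) = 2 * 2 ^ k := by ring
        omega
      have hlt : n - 2 ^ k < 2 ^ k := by
        have : (2:ℕ) ^ (k+1) = 2 * 2 ^ k := by ring
        omega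
      rw [fcut_hi p (k+1) (2*n) h2, hsub, ih _ hlt, fcut_hi p k n h]

lemma fcut_aux (p : ℝ) (hq : p ^ 2 = 1 - p) :
    ∀ ℓ, 1 ≤ ℓ → ∀ n, n < 2 ^ ℓ →
    (∃ c : ℕ, c < 2 ^ (ℓ + 1) ∧ p + fcut p ℓ n = fcut p (ℓ + 1) c) ∨
    (∃ d : ℕ, d < 2 ^ (ℓ + 1) ∧ p + fcut p ℓ n = 1 + p * fcut p (ℓ + 1) d) := by
  intro ℓ hℓ
  induction ℓ, hℓ using Nat.le_induction with
  | base =>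
    intro n hn
    interval_cases n
    · left
      refine ⟨2, by norm_num, ?_⟩
      norm_num [fcut]
    · right
      refine ⟨1, by norm_num, ?_⟩
      norm_num [fcut]
      linear_combination (1 - p) * hq
  | succ ℓ hℓ ih =>
    intro n hn
    obtain ⟨k, rfl⟩ : ∃ k, ℓ = k + 1 := ⟨ℓ - 1, by omega⟩
    have e2 : (2:ℕ) ^ (k+2) = 2 * 2 ^ (k+1) := by ring
    have e1 : (2:ℕ) ^ (k+1) = 2 * 2 ^ k := by ring
    have e3 : (2:ℕ) ^ (k+3) = 2 * 2 ^ (k+2) := by ring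
    by_cases hA : 2 ^ (k+1) ≤ n
    · -- top bit 1
      have hm : n - 2 ^ (k+1) < 2 ^ (k+1) := by omega
      have hnlt : ¬ (n < 2 ^ (k+1)) := by omega
      rcases ih (n - 2 ^ (k+1)) hm with ⟨c, hc, hceq⟩ | ⟨d, hd, hdeq⟩
      · right
        refine ⟨c, by omega, ?_⟩
        rw [fcut_hi p (k+1) n hnlt, fcut_lo p (k+2) c hc]
        linear_combination (1 - p - fcut p (k+1) (n - 2^(k+1))) * hq + p^2 * hceq
      · right
        refine ⟨2 ^ (k+2) + d, by omega, ?_⟩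
        have hnot : ¬ (2 ^ (k+2) + d < 2 ^ (k+2)) := by omega
        rw [fcut_hi p (k+1) n hnlt, fcut_hi p (k+2) (2^(k+2)+d) hnot,
            Nat.add_sub_cancel_left]
        linear_combination (1 - p) * hdeq
    · -- top bit 0
      have hB : n < 2 ^ (k+1) := by omega
      by_cases hBa : n < 2 ^ k
      · -- second bit 0
        left
        refine ⟨2 ^ (k+2) + 4 * n, by omega, ?_⟩
        have hnot : ¬ (2 ^ (k+2) + 4 * n < 2 ^ (k+2)) := by omega
        have h2n : 2 * n < 2 ^ (k+1) := by omega
        have h4n : (4 : ℕ) * n = 2 * (2 * n) := by ring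
        rw [fcut_lo p (k+1) n hB, fcut_lo p k n hBa,
            fcut_hi p (k+2) (2^(k+2)+4*n) hnot, Nat.add_sub_cancel_left,
            h4n, fcut_two_mul p (k+1) (2*n) h2n, fcut_two_mul p k n hBa]
        linear_combination (fcut p k n) * hq
      · -- second bit 1
        right
        have hm : n - 2 ^ k < 2 ^ k := by omega
        refine ⟨2 * (n - 2 ^ k), by omega, ?_⟩
        have hmlt2 : n - 2 ^ k < 2 ^ (k+2) := by omega
        have hmlt1 : n - 2 ^ k < 2 ^ (k+1) := by omega
        rw [fcut_lo p (k+1) n hB, fcut_hi p k n hBa,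
            fcut_two_mul p (k+2) (n - 2^k) hmlt2,
            fcut_lo p (k+1) (n - 2^k) hmlt1, fcut_lo p k (n - 2^k) hm]
        linear_combination (1 - p * fcut p k (n - 2^k)) * hq

/-- for `p = φ - 1`, every `ℓ ≥ 1` and every `n < 2^ℓ`, the sum `p + f_ℓ n` is
either `f_{ℓ+1} c` for some `c < 2^{ℓ+1}`, or `1 + p · f_{ℓ+1} d` for some `d < 2^{ℓ+1}`. -/
theorem golden_fcut_add_p (ℓ : ℕ) (hℓ : 1 ≤ ℓ) (n : ℕ) (hn : n < 2 ^ ℓ) :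
    (∃ c : ℕ, c < 2 ^ (ℓ + 1) ∧
      (phi - 1) + fcut (phi - 1) ℓ n = fcut (phi - 1) (ℓ + 1) c) ∨
    (∃ d : ℕ, d < 2 ^ (ℓ + 1) ∧
      (phi - 1) + fcut (phi - 1) ℓ n = 1 + (phi - 1) * fcut (phi - 1) (ℓ + 1) d) := by
  have h5 : Real.sqrt 5 * Real.sqrt 5 = 5 := Real.mul_self_sqrt (by norm_num)
  have hq : (phi - 1) ^ 2 = 1 - (phi - 1) := by
    unfold phi
    nlinarith [h5]
  exact fcut_aux (phi - 1) hq ℓ hℓ n hn
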